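/- Let {X_i}_{i∈𝓘} be a finite collection of symplectic submanifolds of a symplectic manifold (M, ω) such that for every pair i ≠ j the intersection X_i ∩ X_j is orthogonal, i.e. at each intersection point TM decomposes ω-orthogonally as T(X_i∩X_j) ⊕ N X_i ⊕ N X_j. Then the collection is transverse: for every I ⊆ 𝓘 and x ∈ X_I = ⋂_{i∈I} X_i, N_x X_I = ⊕_{i∈I} N_x X_i. -/

import Mathlib

/-!
Orthogonality of `X_i ∩ X_j` makes `N X_j` `ω`-orthogonal to `N X_i`, hence
`N X_j ⊆ (N X_i)^ω = T X_i` for `j ≠ i`. As `X_i` is symplectic, `N X_i ∩ T X_i = 0`, so `N X_i`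
meets the sum of the other normal spaces trivially. The identity `N X_I = ∑ N X_i` is plain
`ω`-duality: for a nondegenerate reflexive form on a finite-dimensional space,
`(⋂ W_k)^ω = ∑ W_k^ω`.
-/

section

variable {V : Type*} [AddCommGroup V] [Module ℝ V] [FiniteDimensional ℝ V]

/-- `V = A ⊕ B ⊕ C` as an `ω`-orthogonal internal direct sum. -/
def OrthDecomp3 (ω : LinearMap.BilinForm ℝ V) (A B C : Submodule ℝ V) : Prop :=
  A ⊔ B ⊔ C = ⊤ ∧
  Disjoint A (B ⊔ C) ∧ Disjoint B (A ⊔ C) ∧ Disjoint C (A ⊔ B) ∧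
  (∀ a ∈ A, ∀ b ∈ B, ω a b = 0) ∧ (∀ a ∈ A, ∀ c ∈ C, ω a c = 0) ∧
  (∀ b ∈ B, ∀ c ∈ C, ω b c = 0)

namespace LinearMap.BilinForm

lemma orthogonal_iSup {R M : Type*} [CommSemiring R] [AddCommMonoid M] [Module R M]
    {κ : Sort*} (B : LinearMap.BilinForm R M) (W : κ → Submodule R M) :
    B.orthogonal (⨆ k, W k) = ⨅ k, B.orthogonal (W k) := by
  have mem_orthogonal_iff_le_ker (U : Submodule R M) (x : M) :
      x ∈ B.orthogonal U ↔ U ≤ LinearMap.ker (B.flip x) := Iff.rfl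
  ext x
  simp only [Submodule.mem_iInf, mem_orthogonal_iff_le_ker, iSup_le_iff]

variable {K E : Type*} [Field K] [AddCommGroup E] [Module K E] [FiniteDimensional K E]
  {B : LinearMap.BilinForm K E}

lemma orthogonal_iInf (hB : B.Nondegenerate) (hB₀ : B.IsRefl) {κ : Sort*}
    (W : κ → Submodule K E) : B.orthogonal (⨅ k, W k) = ⨆ k, B.orthogonal (W k) := by
  calc B.orthogonal (⨅ k, W k)
      = B.orthogonal (⨅ k, B.orthogonal (B.orthogonal (W k))) := by
        simp only [orthogonal_orthogonal hB hB₀]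
    _ = ⨆ k, B.orthogonal (W k) := by
        rw [← orthogonal_iSup, orthogonal_orthogonal hB hB₀]

lemma orthogonal_le_of_orthogonal_isOrtho (hB : B.Nondegenerate) (hB₀ : B.IsRefl)
    {W U : Submodule K E} (h : ∀ a ∈ B.orthogonal W, ∀ b ∈ B.orthogonal U, B a b = 0) :
    B.orthogonal W ≤ U := by
  rw [← orthogonal_orthogonal hB hB₀ U]
  exact fun a ha b hb => hB₀ _ _ (h a ha b hb)

end LinearMap.BilinForm

open LinearMap.BilinForm in
/-- pointwise, on tangent spaces: let `{X_i}` be symplectic submanifolds of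
`(M, ω)` such that every pairwise intersection is orthogonal:
`TM = T(X_i ∩ X_j) ⊕ N X_i ⊕ N X_j` as an `ω`-orthogonal direct sum, where
`N X_i = (T X_i)^{⊥ω}`.  Then the collection is transverse: for every finite nonempty
`I ⊆ 𝓘` (and each point of `X_I`), `N X_I = ⊕_{i∈I} N X_i`, i.e. the `ω`-orthogonal
complement of `⋂_{i∈I} T X_i` is the (direct) sum of the `ω`-orthogonal complements of the
`T X_i`. -/
theorem stmt13 {ι : Type*} [DecidableEq ι]
    (ω : LinearMap.BilinForm ℝ V) (halt : ω.IsAlt) (hnd : ω.Nondegenerate)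
    (T : ι → Submodule ℝ V)
    -- each `X_i` is symplectic: ω restricts nondegenerately to `T_i`
    (hsymp : ∀ i, (ω.restrict (T i)).Nondegenerate)
    -- pairwise orthogonal intersection
    (horth : ∀ i j, i ≠ j →
      OrthDecomp3 ω (T i ⊓ T j) (ω.orthogonal (T i)) (ω.orthogonal (T j))) :
    ∀ I : Finset ι, I.Nonempty →
      (ω.orthogonal (⨅ i ∈ I, T i) = ⨆ i ∈ I, ω.orthogonal (T i)) ∧
      (∀ i ∈ I, Disjoint (ω.orthogonal (T i))
        (⨆ j ∈ I.erase i, ω.orthogonal (T j))) := by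
  have hrefl : ω.IsRefl := halt.isRefl
  have normal_le_tangent (i j : ι) (hji : j ≠ i) : ω.orthogonal (T j) ≤ T i :=
    orthogonal_le_of_orthogonal_isOrtho hnd hrefl (horth j i hji).2.2.2.2.2.2
  intro I _
  refine ⟨by simp only [orthogonal_iInf hnd hrefl], fun i _ => ?_⟩
  have normal_disjoint_tangent : Disjoint (ω.orthogonal (T i)) (T i) :=
    ((restrict_nondegenerate_iff_isCompl_orthogonal hrefl).mp (hsymp i)).disjoint.symm
  exact normal_disjoint_tangent.mono_right
    (iSup₂_le fun j hj => normal_le_tangent i j (Finset.ne_of_mem_erase hj))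

end
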